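/- Let y ∈ Y = closure(Φ(X)) satisfy (y)_i^∞ ≠ β^∞ for all i > 0. Then for every l ≥ 5 there exists K ∈ ℕ such that σ^K(y) lies in the cylinder [α.β^l], i.e., σ^K(y)_{-1} = α and σ^K(y)_0 = ... = σ^K(y)_{l-1} = β. -/

import Mathlib

open MeasureTheory Filter Topology
open scoped ENNReal

/-- The odometer map on `X = {0,1}^ℕ` (adding one with carry in binary). -/
def Tod (x : ℕ → Bool) : ℕ → Bool := fun k =>
  if ∀ i < k, x i = true then !(x k) else x k

/-- The inverse of the odometer map (subtracting one with borrow). -/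
def TodInv (x : ℕ → Bool) : ℕ → Bool := fun k =>
  if ∀ i < k, x i = false then !(x k) else x k

/-- The number determined by the first `k` binary digits of `x`. -/
def DN (k : ℕ) (x : ℕ → Bool) : ℕ := ∑ i ∈ Finset.range k, 2 ^ i * (x i).toNat

/-- The cylinder `[0^i]` of sequences starting with `i` zeros. -/
def cyl0 (i : ℕ) : Set (ℕ → Bool) := {x | ∀ j < i, x j = false}

/-- `A = ⋃_{i=5}^∞ ⋃_{j=0}^{i-1} T^j([0^i])`. -/
def Aset : Set (ℕ → Bool) := ⋃ (i : ℕ) (_ : 5 ≤ i) (j : ℕ) (_ : j < i), Tod^[j] '' cyl0 i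

/-- `A_k = ⋃_{i=5}^{k} ⋃_{j=0}^{i-1} T^j([0^i])`. -/
def Ak (k : ℕ) : Set (ℕ → Bool) :=
  ⋃ (i : ℕ) (_ : 5 ≤ i) (_ : i ≤ k) (j : ℕ) (_ : j < i), Tod^[j] '' cyl0 i

/-- `E_k = ⋃_{i=k+1}^∞ ⋃_{j=0}^{i-1} T^j([0^i])`. -/
def Ek (k : ℕ) : Set (ℕ → Bool) :=
  ⋃ (i : ℕ) (_ : k + 1 ≤ i) (j : ℕ) (_ : j < i), Tod^[j] '' cyl0 i

/-- `T^n` for `n : ℤ` (using the inverse odometer for negative `n`). -/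
def zIter (n : ℤ) (x : ℕ → Bool) : ℕ → Bool :=
  if 0 ≤ n then Tod^[n.toNat] x else TodInv^[(-n).toNat] x

/-- The factor map `Φ : X → Z = {α,β}^ℤ`, with `β = true`, `α = false`:
`Φ(x)_n = β` iff `T^n(x) ∈ A`. -/
noncomputable def Phi (x : ℕ → Bool) : ℤ → Bool := fun n =>
  @decide (zIter n x ∈ Aset) (Classical.propDecidable _)

/-- The subshift `Y`, the closure of `Φ(X)` in the full two-sided shift. -/
def Ysub : Set (ℤ → Bool) := closure (Set.range Phi)

/-- The shift map on `Z = {α,β}^ℤ`. -/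
def shiftZ (z : ℤ → Bool) : ℤ → Bool := fun n => z (n + 1)

/-- The cylinder in `Z` given by a word `w` of length `n` placed at positions `0,…,n-1`. -/
def cylZ (n : ℕ) (w : Fin n → Bool) : Set (ℤ → Bool) :=
  {z | ∀ i : Fin n, z ((i : ℕ) : ℤ) = w i}

/-! A point `y` of `Y` agrees on every finite window with some `Φ(x)`. Since the odometer enters
`[0^l]` within `2^l` steps and `Φ([0^l]) ⊆ [β^l]`, every window of length `2^l + l` of `Φ(x)`
contains `β^l`; hence `y` has blocks `β^l` arbitrarily far to the right. Since `y` has an `α` at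
some positive position, the last `α` before such a block gives the pattern `α.β^l`. The return
time to `[0^l]` comes from the first `l` binary digits `DN l`, on which the odometer acts as
`+1 mod 2^l`. -/

lemma Tod_zero (x : ℕ → Bool) : Tod x 0 = !x 0 := by
  simp [Tod]

lemma Tod_succ (x : ℕ → Bool) (k : ℕ) :
    Tod x (k + 1) = if x 0 then Tod (fun i => x (i + 1)) k else x (k + 1) := by
  simp only [Tod, Nat.forall_lt_succ_left]
  cases x 0 <;> simp

lemma DN_succ (l : ℕ) (x : ℕ → Bool) :
    DN (l + 1) x = (x 0).toNat + 2 * DN l (fun i => x (i + 1)) := by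
  simp only [DN, Finset.sum_range_succ', Finset.mul_sum, pow_succ]
  ring_nf

lemma DN_lt (l : ℕ) (x : ℕ → Bool) : DN l x < 2 ^ l := by
  induction l generalizing x with
  | zero => simp [DN]
  | succ l ih =>
    have := ih (fun i => x (i + 1))
    have := Bool.toNat_le (x 0)
    rw [DN_succ, pow_succ]
    omega

lemma DN_eq_zero_iff (l : ℕ) (x : ℕ → Bool) : DN l x = 0 ↔ x ∈ cyl0 l := by
  simp [DN, Finset.sum_eq_zero_iff, cyl0]

lemma DN_Tod (l : ℕ) (x : ℕ → Bool) : DN l (Tod x) ≡ DN l x + 1 [MOD 2 ^ l] := by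
  induction l generalizing x with
  | zero => simp [Nat.ModEq, Nat.mod_one]
  | succ l ih =>
    rw [DN_succ, DN_succ, Tod_zero]
    simp only [Tod_succ]
    cases x 0
    · simp only [Bool.not_false, Bool.toNat_true, Bool.toNat_false, Bool.false_eq_true,
        if_false]
      rw [zero_add, add_comm 1]
    · simp only [Bool.not_true, Bool.toNat_true, Bool.toNat_false, if_true]
      rw [pow_succ, mul_comm, zero_add,
        show 1 + 2 * DN l (fun i => x (i + 1)) + 1 = 2 * (DN l (fun i => x (i + 1)) + 1) by ring]
      exact (ih _).mul_left' 2

lemma DN_iterate_Tod (l k : ℕ) (x : ℕ → Bool) :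
    DN l (Tod^[k] x) ≡ DN l x + k [MOD 2 ^ l] := by
  induction k with
  | zero => rfl
  | succ k ih =>
    rw [Function.iterate_succ_apply', ← add_assoc]
    exact (DN_Tod l _).trans (ih.add_right 1)

lemma exists_iterate_Tod_mem_cyl0 (l : ℕ) (x : ℕ → Bool) :
    ∃ k < 2 ^ l, Tod^[k] x ∈ cyl0 l := by
  refine ⟨(2 ^ l - DN l x) % 2 ^ l, Nat.mod_lt _ (by positivity), ?_⟩
  have hsum : DN l x + (2 ^ l - DN l x) % 2 ^ l ≡ 0 [MOD 2 ^ l] :=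
    calc DN l x + (2 ^ l - DN l x) % 2 ^ l
        ≡ DN l x + (2 ^ l - DN l x) [MOD 2 ^ l] := (Nat.mod_modEq _ _).add_left _
      _ = 2 ^ l := Nat.add_sub_cancel' (DN_lt l x).le
      _ ≡ 0 [MOD 2 ^ l] := Nat.modEq_zero_iff_dvd.mpr dvd_rfl
  rw [← DN_eq_zero_iff]
  exact ((DN_iterate_Tod l _ x).trans hsum).eq_of_lt_of_lt (DN_lt l _) (by positivity)

lemma iterate_Tod_mem_Aset {l j : ℕ} (hl : 5 ≤ l) (hj : j < l) {x : ℕ → Bool}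
    (hx : x ∈ cyl0 l) : Tod^[j] x ∈ Aset :=
  Set.mem_iUnion₂.mpr ⟨l, hl, Set.mem_iUnion₂.mpr ⟨j, hj, x, hx, rfl⟩⟩

lemma Phi_natCast_eq_true_iff (x : ℕ → Bool) (n : ℕ) :
    Phi x n = true ↔ Tod^[n] x ∈ Aset := by
  have hz : zIter n x = Tod^[n] x := by simp [zIter]
  simp only [Phi, hz, decide_eq_true_eq]

lemma exists_Phi_block (x : ℕ → Bool) {l : ℕ} (hl : 5 ≤ l) (N : ℕ) :
    ∃ k < 2 ^ l, ∀ j < l, Phi x (N + k + j : ℕ) = true := by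
  obtain ⟨k, hk, hcyl⟩ := exists_iterate_Tod_mem_cyl0 l (Tod^[N] x)
  refine ⟨k, hk, fun j hj => (Phi_natCast_eq_true_iff x _).mpr ?_⟩
  rw [add_comm N, add_comm _ j, Function.iterate_add_apply, Function.iterate_add_apply]
  exact iterate_Tod_mem_Aset hl hj hcyl

lemma exists_eqOn_of_mem_closure {ι α : Type*} [TopologicalSpace α] [DiscreteTopology α]
    {S : Set (ι → α)} {y : ι → α} (hy : y ∈ closure S) {s : Set ι} (hs : s.Finite) :
    ∃ z ∈ S, Set.EqOn z y s := by
  obtain ⟨z, hz, hzS⟩ := mem_closure_iff.mp hy (s.pi fun i => {y i})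
    (isOpen_set_pi hs fun _ _ => isOpen_discrete _) fun _ _ => rfl
  exact ⟨z, hzS, hz⟩

lemma exists_block_of_mem_Ysub {y : ℤ → Bool} (hy : y ∈ Ysub) {l : ℕ} (hl : 5 ≤ l) (N : ℕ) :
    ∃ K ≥ N, ∀ j < l, y (K + j : ℕ) = true := by
  obtain ⟨_, ⟨x, rfl⟩, hxy⟩ :=
    exists_eqOn_of_mem_closure hy (Set.finite_Ico (N : ℤ) (N + 2 ^ l + l : ℕ))
  obtain ⟨k, hk, hblock⟩ := exists_Phi_block x hl N
  refine ⟨N + k, Nat.le_add_right N k, fun j hj => ?_⟩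
  rw [← hxy ⟨by omega, Nat.cast_lt.mpr (by omega)⟩]
  exact hblock j hj

lemma exists_false_before_block {y : ℤ → Bool} {n K : ℤ} {l : ℕ} (hn : y n = false) (hnK : n < K)
    (hblock : ∀ j < l, y (K + j) = true) :
    ∃ K' > n, y (K' - 1) = false ∧ ∀ j < l, y (K' + j) = true := by
  obtain ⟨g, ⟨hng, hgK, hg⟩, hmax⟩ := Int.exists_greatest_of_bdd
    (P := fun k => n ≤ k ∧ k < K ∧ y k = false) ⟨K, fun k hk => hk.2.1.le⟩ ⟨n, le_rfl, hnK, hn⟩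
  refine ⟨g + 1, by omega, by simpa using hg, fun j hj => ?_⟩
  by_cases hjK : K ≤ g + 1 + j
  · have := hblock (g + 1 + j - K).toNat (by omega)
    rwa [Int.toNat_of_nonneg (by omega), add_sub_cancel] at this
  · by_contra hfalse
    have := hmax (g + 1 + j) ⟨by omega, by omega, by simpa using hfalse⟩
    omega

/-- if `y ∈ Y` has no right tail of all `β`'s, then for every `l ≥ 5` there
is `K ∈ ℕ` with `σ^K(y) ∈ [α.β^l]`, i.e. `y_{K-1} = α` and `y_K = ⋯ = y_{K+l-1} = β`. -/
theorem stmt15 (y : ℤ → Bool) (hy : y ∈ Ysub)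
    (hfwd : ∀ i : ℤ, 0 < i → ¬ ∀ n ≥ i, y n = true)
    (l : ℕ) (hl : 5 ≤ l) :
    ∃ K : ℕ, y ((K : ℤ) - 1) = false ∧ ∀ m : ℕ, m < l → y ((K : ℤ) + m) = true := by
  obtain ⟨n, hn1, hn⟩ : ∃ n ≥ 1, y n = false := by simpa using hfwd 1 one_pos
  obtain ⟨K, hK, hblock⟩ := exists_block_of_mem_Ysub hy hl (n.toNat + 1)
  obtain ⟨K', hnK', hK'⟩ := exists_false_before_block (K := K) hn (by omega)
    (fun j hj => by simpa using hblock j hj)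
  lift K' to ℕ using by omega
  exact ⟨K', hK'⟩
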